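/- arXiv:2303.12562 — 6 statements merged into one kernel-verified Lean document; each statement's English description precedes it below -/
import Mathlib

section
/- There exist two sequences of polynomials (x_k) and (y_k) in C[s1,s2,s3,x,y] (graded by deg s_i = 1, deg x = deg y = 0) with x_0 = x, y_0 = y, such that for every k ≥ 1: x_k and y_k lie in the intersection of the span of monomials of s-degree ≤ k with the ideal (x,y); x_k − x_{k−1} and y_k − y_{k−1} are homogeneous of s-degree k; and x_k·y_k − (xy + s1·x² + s2·y² + s3·x²y²) lies in (s1,s2,s3)^{k+1} ∩ (x,y)². -/
open MvPolynomial

noncomputable section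

/-- The ring `R = ℂ[s₁,s₂,s₃,x,y]`, with variables `0,1,2 ↦ s₁,s₂,s₃` and `3,4 ↦ x,y`. -/
abbrev R0 : Type := MvPolynomial (Fin 5) ℂ

/-- The weights: `deg sᵢ = 1`, `deg x = deg y = 0`. -/
def w0 : Fin 5 → ℕ := ![1, 1, 1, 0, 0]

/-- The ideal `(s₁,s₂,s₃)`. -/
def Is : Ideal R0 := Ideal.span {X 0, X 1, X 2}

/-- The ideal `(x,y)`. -/
def Ixy : Ideal R0 := Ideal.span {X 3, X 4}


/-!
With `u = s₁ + s₃y²` and `t = s₂u` the polynomial is `xy + ux² + s₂y²`, and for all `P`, `Q`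
`(x + s₂P y)(u x + (1 - tQ) y) = xy + ux² + s₂y² + t(P - Q) xy + s₂(P - 1 - tPQ) y²`.
Both error terms vanish when `P = Q` is the Catalan series `C(t)`, since `C = 1 + tC²`.
As `s₂` has degree 1 and `t` degree 2, the truncations to degree `k` take for `P` and `Q` the
Catalan partial sums of lengths `⌈k/2⌉` and `⌊k/2⌋`; then `t^(⌊k/2⌋+1)` divides `t(P - Q)` and
`t^⌈k/2⌉` divides `P - 1 - tPQ`, so the error lies in `(s₁,s₂,s₃)^(k+1)`.
-/

section Factors

variable {A : Type*} [CommRing A]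

def catalanSum (t : A) (n : ℕ) : A :=
  ∑ j ∈ Finset.range n, (catalan j : A) * t ^ j

lemma catalanSum_succ (t : A) (n : ℕ) :
    catalanSum t (n + 1) = catalanSum t n + catalan n * t ^ n :=
  Finset.sum_range_succ _ _

lemma aeval_catalanSum_X (t : A) (n : ℕ) :
    Polynomial.aeval t (catalanSum (Polynomial.X : Polynomial ℤ) n) = catalanSum t n := by
  simp [catalanSum]

lemma coeff_catalanSum_X (n d : ℕ) :
    (catalanSum (Polynomial.X : Polynomial ℤ) n).coeff d =
      if d < n then (catalan d : ℤ) else 0 := by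
  simp [catalanSum, Polynomial.coeff_natCast_mul, Polynomial.coeff_X_pow]

lemma pow_dvd_catalanSum_sub (t : A) {m n : ℕ} (h : m ≤ n) :
    t ^ m ∣ catalanSum t n - catalanSum t m := by
  have hX : (Polynomial.X : Polynomial ℤ) ^ m ∣
      catalanSum Polynomial.X n - catalanSum Polynomial.X m := by
    rw [Polynomial.X_pow_dvd_iff]
    intro d hd
    simp [coeff_catalanSum_X, hd, hd.trans_le h]
  simpa [aeval_catalanSum_X] using map_dvd (Polynomial.aeval t) hX

lemma pow_dvd_catalanSum_sub_one_sub (t : A) {m n : ℕ} (h : n ≤ m + 1) :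
    t ^ n ∣ catalanSum t n - 1 - t * (catalanSum t n * catalanSum t m) := by
  have hX : (Polynomial.X : Polynomial ℤ) ^ n ∣ catalanSum Polynomial.X n - 1 -
      Polynomial.X * (catalanSum Polynomial.X n * catalanSum Polynomial.X m) := by
    rw [Polynomial.X_pow_dvd_iff]
    rintro (_ | e) hd
    · simp [coeff_catalanSum_X, hd]
    · have hprod : (catalanSum Polynomial.X n * catalanSum Polynomial.X m).coeff e
          = (catalan (e + 1) : ℤ) := by
        rw [Polynomial.coeff_mul, catalan_succ', Nat.cast_sum]
        refine Finset.sum_congr rfl fun p hp => ?_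
        have := Finset.HasAntidiagonal.mem_antidiagonal.mp hp
        rw [coeff_catalanSum_X, coeff_catalanSum_X, if_pos (by omega), if_pos (by omega)]
        push_cast; rfl
      simp [Polynomial.coeff_X_mul, hprod, coeff_catalanSum_X, hd, Polynomial.coeff_one]
  simpa [aeval_catalanSum_X] using map_dvd (Polynomial.aeval t) hX

variable {I J : Ideal A} {s u x y : A}

def leftFactor (s u x y : A) (k : ℕ) : A :=
  x + s * catalanSum (s * u) ((k + 1) / 2) * y

def rightFactor (s u x y : A) (k : ℕ) : A :=
  if k = 0 then y else u * x + (1 - s * u * catalanSum (s * u) (k / 2)) * y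

lemma leftFactor_zero : leftFactor s u x y 0 = x := by
  simp [leftFactor, catalanSum]

lemma rightFactor_zero : rightFactor s u x y 0 = y := if_pos rfl

lemma leftFactor_mem (hx : x ∈ J) (hy : y ∈ J) (k : ℕ) : leftFactor s u x y k ∈ J :=
  add_mem hx (J.mul_mem_left _ hy)

lemma rightFactor_mem (hx : x ∈ J) (hy : y ∈ J) (k : ℕ) : rightFactor s u x y k ∈ J := by
  unfold rightFactor
  split_ifs
  exacts [hy, add_mem (J.mul_mem_left _ hx) (J.mul_mem_left _ hy)]

lemma mul_pow_mem_pow_two_mul (hs : s ∈ I) (hu : u ∈ I) (n : ℕ) : (s * u) ^ n ∈ I ^ (2 * n) := by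
  rw [pow_mul, sq]
  exact Ideal.pow_mem_pow (Ideal.mul_mem_mul hs hu) n

lemma leftFactor_mul_rightFactor_sub_mem {k : ℕ} (hk : k ≠ 0) (hs : s ∈ I) (hu : u ∈ I)
    (hx : x ∈ J) (hy : y ∈ J) :
    leftFactor s u x y k * rightFactor s u x y k - (x * y + u * x ^ 2 + s * y ^ 2)
      ∈ I ^ (k + 1) ⊓ J ^ 2 := by
  set t := s * u
  set P := catalanSum t ((k + 1) / 2)
  set Q := catalanSum t (k / 2)
  have hPQ : t ^ (k / 2) ∣ P - Q := pow_dvd_catalanSum_sub t (by omega)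
  have hcat : t ^ ((k + 1) / 2) ∣ P - 1 - t * (P * Q) :=
    pow_dvd_catalanSum_sub_one_sub t (by omega)
  have hexp : leftFactor s u x y k * rightFactor s u x y k - (x * y + u * x ^ 2 + s * y ^ 2)
      = t * (P - Q) * (x * y) + s * (P - 1 - t * (P * Q)) * y ^ 2 := by
    simp only [leftFactor, rightFactor, if_neg hk]
    ring
  have hxy : x * y ∈ J ^ 2 := sq J ▸ Ideal.mul_mem_mul hx hy
  rw [hexp]
  refine ⟨add_mem ?_ ?_,
    add_mem (Ideal.mul_mem_left _ _ hxy) (Ideal.mul_mem_left _ _ (Ideal.pow_mem_pow hy 2))⟩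
  · refine Ideal.mem_of_dvd _ ((mul_dvd_mul_left t hPQ).mul_right _) ?_
    rw [← pow_succ']
    exact Ideal.pow_le_pow_right (by omega) (mul_pow_mem_pow_two_mul hs hu _)
  · refine Ideal.mem_of_dvd _ ((mul_dvd_mul_left s hcat).mul_right _) ?_
    have hmem : s * t ^ ((k + 1) / 2) ∈ I ^ (2 * ((k + 1) / 2) + 1) :=
      pow_succ' I _ ▸ Ideal.mul_mem_mul hs (mul_pow_mem_pow_two_mul hs hu _)
    exact Ideal.pow_le_pow_right (by omega) hmem

end Factors

section Grading

variable {σ R : Type*} [CommRing R] {w : σ → ℕ} {s u x y : MvPolynomial σ R}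

lemma weightedTotalDegree_le_of_succ_sub_mem {p : ℕ → MvPolynomial σ R}
    (h0 : IsWeightedHomogeneous w (p 0) 0)
    (hsucc : ∀ m, p (m + 1) - p m ∈ weightedHomogeneousSubmodule R w (m + 1)) (k : ℕ) :
    weightedTotalDegree w (p k) ≤ k := by
  classical
  induction k with
  | zero => exact Finset.sup_le fun d hd => (h0 (mem_support_iff.mp hd)).le
  | succ m ih =>
    refine Finset.sup_le fun d hd => ?_
    rw [← add_sub_cancel (p m) (p (m + 1))] at hd
    rcases Finset.mem_union.mp (support_add hd) with hd | hd
    · exact (Finset.le_sup hd).trans (ih.trans m.le_succ)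
    · exact ((mem_weightedHomogeneousSubmodule _ _ _ _).mp (hsucc m) (mem_support_iff.mp hd)).le

lemma isWeightedHomogeneous_catalanSum_sub {t : MvPolynomial σ R}
    (ht : IsWeightedHomogeneous w t 2) (m : ℕ) :
    IsWeightedHomogeneous w (catalanSum t (m / 2 + 1) - catalanSum t ((m + 1) / 2)) m := by
  obtain ⟨n, rfl | rfl⟩ := Nat.even_or_odd' m
  · rw [show 2 * n / 2 + 1 = n + 1 by omega, show (2 * n + 1) / 2 = n by omega,
      catalanSum_succ, add_sub_cancel_left]
    simpa [map_natCast, mul_comm 2 n] using (ht.pow n).C_mul (catalan n : R)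
  · rw [show (2 * n + 1) / 2 + 1 = n + 1 by omega, show (2 * n + 1 + 1) / 2 = n + 1 by omega,
      sub_self]
    exact isWeightedHomogeneous_zero R w _

lemma leftFactor_succ_sub_mem (hs : IsWeightedHomogeneous w s 1)
    (hu : IsWeightedHomogeneous w u 1) (hy : IsWeightedHomogeneous w y 0) (m : ℕ) :
    leftFactor s u x y (m + 1) - leftFactor s u x y m ∈
      weightedHomogeneousSubmodule R w (m + 1) := by
  have hdiff : leftFactor s u x y (m + 1) - leftFactor s u x y m
      = s * (catalanSum (s * u) (m / 2 + 1) - catalanSum (s * u) ((m + 1) / 2)) * y := by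
    rw [leftFactor, leftFactor, show (m + 1 + 1) / 2 = m / 2 + 1 by omega]
    ring
  rw [mem_weightedHomogeneousSubmodule, hdiff]
  convert (hs.mul (isWeightedHomogeneous_catalanSum_sub (hs.mul hu) m)).mul hy using 1
  omega

lemma rightFactor_succ_sub_mem (hs : IsWeightedHomogeneous w s 1)
    (hu : IsWeightedHomogeneous w u 1) (hx : IsWeightedHomogeneous w x 0)
    (hy : IsWeightedHomogeneous w y 0) (m : ℕ) :
    rightFactor s u x y (m + 1) - rightFactor s u x y m ∈
      weightedHomogeneousSubmodule R w (m + 1) := by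
  rw [mem_weightedHomogeneousSubmodule]
  cases m with
  | zero =>
    have hdiff : rightFactor s u x y 1 - rightFactor s u x y 0 = u * x := by
      simp [rightFactor, catalanSum]
    simpa [hdiff] using hu.mul hx
  | succ n =>
    have hdiff : rightFactor s u x y (n + 2) - rightFactor s u x y (n + 1)
        = -(s * u * (catalanSum (s * u) (n / 2 + 1) - catalanSum (s * u) ((n + 1) / 2)) *
            y) := by
      rw [rightFactor, rightFactor, if_neg (by omega), if_neg (by omega),
        show (n + 2) / 2 = n / 2 + 1 by omega]
      ring
    rw [hdiff]
    convert (((hs.mul hu).mul (isWeightedHomogeneous_catalanSum_sub (hs.mul hu) n)).mul hy).neg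
      using 1
    omega

end Grading

theorem stmt0 :
    ∃ xs ys : ℕ → R0,
      xs 0 = X 3 ∧ ys 0 = X 4 ∧
      ∀ k : ℕ, 1 ≤ k →
        weightedTotalDegree w0 (xs k) ≤ k ∧ xs k ∈ Ixy ∧
        weightedTotalDegree w0 (ys k) ≤ k ∧ ys k ∈ Ixy ∧
        xs k - xs (k - 1) ∈ weightedHomogeneousSubmodule ℂ w0 k ∧
        ys k - ys (k - 1) ∈ weightedHomogeneousSubmodule ℂ w0 k ∧
        xs k * ys k - (X 3 * X 4 + X 0 * X 3 ^ 2 + X 1 * X 4 ^ 2 + X 2 * X 3 ^ 2 * X 4 ^ 2)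
          ∈ Is ^ (k + 1) ⊓ Ixy ^ 2 := by
  set u : R0 := X 0 + X 2 * X 4 ^ 2
  have hf : (X 3 * X 4 + X 0 * X 3 ^ 2 + X 1 * X 4 ^ 2 + X 2 * X 3 ^ 2 * X 4 ^ 2 : R0)
      = X 3 * X 4 + u * X 3 ^ 2 + X 1 * X 4 ^ 2 := by ring
  have hX (i : Fin 5) : IsWeightedHomogeneous w0 (X i : R0) (w0 i) :=
    isWeightedHomogeneous_X ℂ w0 i
  have hs : IsWeightedHomogeneous w0 (X 1 : R0) 1 := hX 1
  have hx : IsWeightedHomogeneous w0 (X 3 : R0) 0 := hX 3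
  have hy : IsWeightedHomogeneous w0 (X 4 : R0) 0 := hX 4
  have hu : IsWeightedHomogeneous w0 u 1 := (hX 0).add ((hX 2).mul (hy.pow 2))
  have hs_mem : X 1 ∈ Is := Ideal.subset_span (by simp)
  have hu_mem : u ∈ Is :=
    add_mem (Ideal.subset_span (by simp)) (Ideal.mul_mem_right _ _ (Ideal.subset_span (by simp)))
  have hx_mem : X 3 ∈ Ixy := Ideal.subset_span (by simp)
  have hy_mem : X 4 ∈ Ixy := Ideal.subset_span (by simp)
  have hxs := leftFactor_succ_sub_mem (x := X 3) hs hu hy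
  have hys := rightFactor_succ_sub_mem hs hu hx hy
  refine ⟨leftFactor (X 1) u (X 3) (X 4), rightFactor (X 1) u (X 3) (X 4),
    leftFactor_zero, rightFactor_zero, fun k hk => ?_⟩
  obtain ⟨m, rfl⟩ : ∃ m, k = m + 1 := ⟨k - 1, by omega⟩
  rw [hf, Nat.add_sub_cancel]
  exact ⟨weightedTotalDegree_le_of_succ_sub_mem (by rw [leftFactor_zero]; exact hx) hxs _,
    leftFactor_mem hx_mem hy_mem _,
    weightedTotalDegree_le_of_succ_sub_mem (by rw [rightFactor_zero]; exact hy) hys _,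
    rightFactor_mem hx_mem hy_mem _, hxs m, hys m,
    leftFactor_mul_rightFactor_sub_mem m.succ_ne_zero hs_mem hu_mem hx_mem hy_mem⟩

end
end

section
/- In the formal power series ring C[x,y][[s1,s2,s3]], the element xy + s1·x² + s2·y² + s3·x²y² factors as a product X·Y of two power series X, Y whose constant terms (in the s-variables) are x and y respectively, and all of whose coefficients lie in the ideal (x,y) of C[x,y]. -/
noncomputable section

/-- The ring `ℂ[x,y]`, with `x = X 0`, `y = X 1`. -/
abbrev Cxy : Type := MvPolynomial (Fin 2) ℂ

/-- The ring `ℂ[x,y][[s₁,s₂,s₃]]`. -/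
abbrev A1 : Type := MvPowerSeries (Fin 3) Cxy

def px : Cxy := MvPolynomial.X 0
def py : Cxy := MvPolynomial.X 1

/-!
With `w = s₁ + s₃ y²` the series is the binary quadratic form `w x² + x y + s₂ y²`, which splits
as `(x + a y) (w x + (1 - a w) y)` whenever `a = s₂ + w a²`. Such a root with zero constant term
is `a = s₂ c(s₂ w)`, where `c = 1 + t c²` is the Catalan generating function.
-/

theorem mul_eq_quadratic_of_eq_add_mul_sq {R : Type*} [CommRing R] {a s w : R}
    (ha : a = s + w * a ^ 2) (x y : R) :
    (x + a * y) * (w * x + (1 - a * w) * y) = w * x ^ 2 + x * y + s * y ^ 2 := by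
  linear_combination y ^ 2 * ha

namespace MvPowerSeries

theorem exists_eq_one_add_mul_sq {σ R : Type*} [CommRing R] {v : MvPowerSeries σ R}
    (hv : PowerSeries.HasSubst v) : ∃ c : MvPowerSeries σ R, c = 1 + v * c ^ 2 := by
  refine ⟨PowerSeries.substAlgHom hv (PowerSeries.catalanSeries.map (Nat.castRingHom ℤ)), ?_⟩
  have h := congrArg (fun f => PowerSeries.substAlgHom hv (f.map (Nat.castRingHom ℤ)))
    PowerSeries.catalanSeries_sq_mul_X_add_one
  simp only [map_add, map_mul, map_pow, map_one, PowerSeries.map_X, PowerSeries.substAlgHom_X] at h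
  linear_combination -h

theorem exists_eq_add_mul_sq {σ R : Type*} [CommRing R] {s : MvPowerSeries σ R}
    (hs : constantCoeff s = 0) (w : MvPowerSeries σ R) :
    ∃ a : MvPowerSeries σ R, a = s + w * a ^ 2 ∧ constantCoeff a = 0 := by
  obtain ⟨c, hc⟩ := exists_eq_one_add_mul_sq (v := s * w)
    (PowerSeries.HasSubst.of_constantCoeff_zero (by simp [hs]))
  exact ⟨s * c, by linear_combination s * hc, by simp [hs]⟩

theorem coeff_mul_C_add_mul_C_mem {σ R : Type*} [CommRing R] {I : Ideal R} {r t : R}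
    (hr : r ∈ I) (ht : t ∈ I) (f g : MvPowerSeries σ R) (d : σ →₀ ℕ) :
    coeff d (f * C r + g * C t) ∈ I := by
  rw [map_add, coeff_mul_C, coeff_mul_C]
  exact add_mem (I.mul_mem_left _ hr) (I.mul_mem_left _ ht)

end MvPowerSeries

open MvPowerSeries in
theorem stmt1 :
    ∃ Xs Ys : A1,
      Xs * Ys =
        MvPowerSeries.C (σ := Fin 3) (R := Cxy) (px * py)
          + MvPowerSeries.X 0 * MvPowerSeries.C (σ := Fin 3) (R := Cxy) (px ^ 2)
          + MvPowerSeries.X 1 * MvPowerSeries.C (σ := Fin 3) (R := Cxy) (py ^ 2)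
          + MvPowerSeries.X 2 * MvPowerSeries.C (σ := Fin 3) (R := Cxy) (px ^ 2 * py ^ 2) ∧
      MvPowerSeries.constantCoeff (σ := Fin 3) (R := Cxy) Xs = px ∧
      MvPowerSeries.constantCoeff (σ := Fin 3) (R := Cxy) Ys = py ∧
      (∀ d, MvPowerSeries.coeff (R := Cxy) d Xs ∈ Ideal.span {px, py}) ∧
      (∀ d, MvPowerSeries.coeff (R := Cxy) d Ys ∈ Ideal.span {px, py}) := by
  set w : A1 := X 0 + X 2 * C (py ^ 2)
  obtain ⟨a, ha, ha₀⟩ := exists_eq_add_mul_sq (s := (X 1 : A1)) (by simp) w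
  have hx : px ∈ Ideal.span {px, py} := Ideal.subset_span (by simp)
  have hy : py ∈ Ideal.span {px, py} := Ideal.subset_span (by simp)
  refine ⟨C px + a * C py, w * C px + (1 - a * w) * C py, ?_, ?_, ?_, ?_, ?_⟩
  · rw [mul_eq_quadratic_of_eq_add_mul_sq ha]
    simp only [w, map_mul, map_pow]
    ring
  · simp [ha₀]
  · simp [ha₀, w]
  · intro d
    simpa using coeff_mul_C_add_mul_C_mem hx hy 1 a d
  · exact coeff_mul_C_add_mul_C_mem hx hy _ _
end
end

section
/- For every k ∈ N, the two S_k-algebras A_k = S_k[x,y,z,w]/(xy − zw + s4) and B_k = S_k[x,y,z,w]/(xy − zw + s1·x² + s2·y² + s3·x²y² + s4), where S_k = C[s1,s2,s3,s4]/(s1,s2,s3,s4)^{k+1}, are isomorphic as S_k-algebras via an isomorphism that is the identity modulo (s1,s2,s3,s4) and fixes z and w; moreover these isomorphisms can be chosen compatibly under the projections S_k → S_{k−1}. -/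
/-!
The substitution `x ↦ g x + s₂ y`, `y ↦ y + s₁ d x` (fixing the `sᵢ`, `z`, `w`) sends `xy` to
`(g + s₁s₂ d) xy + s₁ g d x² + s₂ y²`, hence `xy - zw + s₄` to
`xy - zw + s₁x² + s₂y² + s₃x²y² + s₄` as soon as `g d = 1` and `g + s₁s₂ d = 1 + s₃xy`.
With `g = 1 + s₃xy - s₁s₂ d` these say that `d` is a fixed point of the contraction
`d ↦ 1 - s₃xy d + s₁s₂ d²`, whose Picard iterates solve them modulo `(s) ^ (k + 1)` and agree
with each other there, which gives the compatibility in `k`. A substitution fixing the `sᵢ` and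
congruent to the identity modulo `(s)` acts trivially on every `(s) ^ n / (s) ^ (n + 1)`, so it is
an automorphism modulo `(s) ^ (k + 1)`, and it carries the first equation onto the second.
-/

open MvPolynomial

noncomputable section

/-- The ring `ℂ[s₁,s₂,s₃,s₄,x,y,z,w]`: variables `0,1,2,3 ↦ s₁,s₂,s₃,s₄` and
`4,5,6,7 ↦ x,y,z,w`. -/
abbrev R2 : Type := MvPolynomial (Fin 8) ℂ

/-- The ideal `(s₁,s₂,s₃,s₄)`. -/
def mS : Ideal R2 := Ideal.span {X 0, X 1, X 2, X 3}

/-- `xy - zw + s₄`. -/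
def fA : R2 := X 4 * X 5 - X 6 * X 7 + X 3

/-- `xy - zw + s₁x² + s₂y² + s₃x²y² + s₄`. -/
def fB : R2 := X 4 * X 5 - X 6 * X 7 + X 0 * X 4 ^ 2 + X 1 * X 5 ^ 2
    + X 2 * X 4 ^ 2 * X 5 ^ 2 + X 3

/-- `A_k = S_k[x,y,z,w]/(xy - zw + s₄)` presented as a quotient of `R2`. -/
def IA (k : ℕ) : Ideal R2 := mS ^ (k + 1) ⊔ Ideal.span {fA}

/-- `B_k = S_k[x,y,z,w]/(xy - zw + s₁x² + s₂y² + s₃x²y² + s₄)` presented as a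
quotient of `R2`. -/
def IB (k : ℕ) : Ideal R2 := mS ^ (k + 1) ⊔ Ideal.span {fB}

theorem IBle (k : ℕ) : IB (k + 1) ≤ IB k :=
  sup_le_sup_right (Ideal.pow_le_pow_right (by omega)) _

section Unipotent

variable {A R : Type*} [CommRing A] [CommRing R] [Algebra A R] {I : Ideal R}

theorem iterate_succ_sub_iterate_mem_pow {T : R → R} {x : R} (hx : T x - x ∈ I)
    (hT : ∀ n a b, a - b ∈ I ^ n → T a - T b ∈ I ^ (n + 1)) (k : ℕ) :
    T^[k + 1] x - T^[k] x ∈ I ^ (k + 1) := by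
  induction k with
  | zero => simpa using hx
  | succ k ih =>
    simpa only [Function.iterate_succ_apply'] using hT _ _ _ ih

theorem sub_mem_pow_succ_of_fix_generators {f : R →+* R} {S : Set R}
    (hf : ∀ a, f a - a ∈ Ideal.span S) (hS : ∀ s ∈ S, f s = s) (n : ℕ) :
    ∀ a ∈ Ideal.span S ^ n, f a - a ∈ Ideal.span S ^ (n + 1) := by
  induction n with
  | zero => simpa using hf
  | succ n ih =>
    intro a ha
    rw [pow_succ] at ha
    induction ha using Submodule.mul_induction_on' with
    | mem_mul_mem x hx y hy =>
      induction hy using Submodule.span_induction generalizing x with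
      | mem s hs =>
        rw [map_mul, hS s hs, ← sub_mul, pow_succ]
        exact Ideal.mul_mem_mul (ih x hx) (Ideal.subset_span hs)
      | zero => simp
      | add y z _ _ hy hz =>
        rw [mul_add, map_add, add_sub_add_comm]
        exact add_mem (hy x hx) (hz x hx)
      | smul r y _ hy =>
        rw [smul_eq_mul, ← mul_assoc]
        exact hy (x * r) (Ideal.mul_mem_right r _ hx)
    | add x _ y _ hx hy =>
      rw [map_add, add_sub_add_comm]
      exact add_mem hx hy

variable {f : R →ₐ[A] R} (hf : ∀ n, ∀ a ∈ I ^ n, f a - a ∈ I ^ (n + 1))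
include hf

theorem map_mem_pow {N : ℕ} {a : R} (ha : a ∈ I ^ N) : f a ∈ I ^ N := by
  simpa using add_mem (Ideal.pow_le_pow_right N.le_succ (hf N a ha)) ha

theorem mem_pow_of_map_mem_pow {N : ℕ} {a : R} (ha : f a ∈ I ^ N) : a ∈ I ^ N := by
  suffices ∀ m ≤ N, a ∈ I ^ m from this N le_rfl
  intro m hm
  induction m with
  | zero => simp
  | succ m ih =>
    have hfa : f a ∈ I ^ (m + 1) := Ideal.pow_le_pow_right hm ha
    simpa using sub_mem hfa (hf m a (ih (by omega)))

theorem exists_map_sub_mem_pow (b : R) (N : ℕ) : ∃ a, f a - b ∈ I ^ N := by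
  induction N with
  | zero => exact ⟨0, by simp⟩
  | succ N ih =>
    obtain ⟨a, ha⟩ := ih
    refine ⟨a - (f a - b), ?_⟩
    rw [map_sub]
    convert neg_mem (hf N _ ha) using 1
    ring

def quotientPowEquiv (N : ℕ) : (R ⧸ I ^ N) ≃ₐ[A] (R ⧸ I ^ N) :=
  AlgEquiv.ofBijective (Ideal.quotientMapₐ (I ^ N) f fun _ ha => map_mem_pow hf ha) <| by
    refine ⟨(injective_iff_map_eq_zero _).mpr fun x hx => ?_, fun y => ?_⟩
    · obtain ⟨a, rfl⟩ := Ideal.Quotient.mk_surjective x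
      exact Ideal.Quotient.eq_zero_iff_mem.mpr
        (mem_pow_of_map_mem_pow hf (Ideal.Quotient.eq_zero_iff_mem.mp hx))
    · obtain ⟨b, rfl⟩ := Ideal.Quotient.mk_surjective y
      obtain ⟨a, ha⟩ := exists_map_sub_mem_pow hf b N
      exact ⟨Ideal.Quotient.mk _ a, Ideal.Quotient.mk_eq_mk_iff_sub_mem _ _ |>.mpr ha⟩

def quotientSupSpanEquiv (N : ℕ) {a b : R} (hab : f a - b ∈ I ^ N) :
    (R ⧸ I ^ N ⊔ Ideal.span {a}) ≃ₐ[A] (R ⧸ I ^ N ⊔ Ideal.span {b}) :=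
  (DoubleQuot.quotQuotEquivQuotSupₐ A (I ^ N) (Ideal.span {a})).symm.trans <|
    (Ideal.quotientEquivAlg _ _ (quotientPowEquiv hf N) (by
      have hmk : quotientPowEquiv hf N (Ideal.Quotient.mkₐ A _ a) = Ideal.Quotient.mkₐ A _ b :=
        Ideal.Quotient.mk_eq_mk_iff_sub_mem _ _ |>.mpr hab
      simp only [Ideal.map_span, Set.image_singleton]
      rw [← hmk]; rfl)).trans
      (DoubleQuot.quotQuotEquivQuotSupₐ A (I ^ N) (Ideal.span {b}))

theorem quotientSupSpanEquiv_mk (N : ℕ) {a b : R} (hab : f a - b ∈ I ^ N) (r : R) :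
    quotientSupSpanEquiv hf N hab (Ideal.Quotient.mk _ r) = Ideal.Quotient.mk _ (f r) :=
  rfl

end Unipotent

theorem MvPolynomial.algHom_sub_mem_of_forall_X {σ A R : Type*} [CommRing A] [CommRing R]
    [Algebra A R] {I : Ideal R} {f g : MvPolynomial σ A →ₐ[A] R}
    (h : ∀ i, f (X i) - g (X i) ∈ I) (p : MvPolynomial σ A) : f p - g p ∈ I := by
  have : (Ideal.Quotient.mkₐ A I).comp f = (Ideal.Quotient.mkₐ A I).comp g :=
    algHom_ext fun i => Ideal.Quotient.mk_eq_mk_iff_sub_mem _ _ |>.mpr (h i)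
  exact Ideal.Quotient.mk_eq_mk_iff_sub_mem _ _ |>.mp congr($this p)

namespace OrdinaryDoublePoint

-- `u = s₃xy` and `v = s₁s₂`.
def u : R2 := X 2 * (X 4 * X 5)

def v : R2 := X 0 * X 1

def step (d : R2) : R2 := 1 - u * d + v * d ^ 2

def d (k : ℕ) : R2 := step^[k] 1

def g (k : ℕ) : R2 := 1 + u - v * d k

def subst (k : ℕ) : R2 →ₐ[ℂ] R2 :=
  aeval ![X 0, X 1, X 2, X 3, g k * X 4 + X 1 * X 5, X 5 + X 0 * d k * X 4, X 6, X 7]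

theorem subst_X_four (k : ℕ) : subst k (X 4) = g k * X 4 + X 1 * X 5 := by
  simp [subst]

theorem subst_X_five (k : ℕ) : subst k (X 5) = X 5 + X 0 * d k * X 4 := by
  simp [subst]

theorem subst_X_of_ne (k : ℕ) {i : Fin 8} (h4 : i ≠ 4) (h5 : i ≠ 5) : subst k (X i) = X i := by
  fin_cases i <;> simp_all [subst]

theorem subst_X_of_val_le (k : ℕ) {i : Fin 8} (hi : i.val ≤ 3) : subst k (X i) = X i :=
  subst_X_of_ne k (by rintro rfl; simp at hi) (by rintro rfl; simp at hi)

theorem X_mem_mS {i : Fin 8} (hi : i.val ≤ 3) : X i ∈ mS := by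
  apply Ideal.subset_span
  fin_cases i <;> simp_all

theorem u_mem_mS : u ∈ mS := Ideal.mul_mem_right _ _ (X_mem_mS (i := 2) (by simp))

theorem v_mem_mS : v ∈ mS := Ideal.mul_mem_right _ _ (X_mem_mS (i := 0) (by simp))

theorem d_succ (k : ℕ) : d (k + 1) = step (d k) :=
  Function.iterate_succ_apply' step k 1

theorem d_succ_sub_d_mem (k : ℕ) : d (k + 1) - d k ∈ mS ^ (k + 1) := by
  have h_one : step 1 - 1 = v - u := by simp only [step]; ring
  refine iterate_succ_sub_iterate_mem_pow (h_one ▸ sub_mem v_mem_mS u_mem_mS)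
    (fun n a b hab => ?_) k
  rw [show step a - step b = (a - b) * (v * (a + b) - u) by simp only [step]; ring, pow_succ]
  exact Ideal.mul_mem_mul hab (sub_mem (Ideal.mul_mem_right _ _ v_mem_mS) u_mem_mS)

theorem subst_sub_mem (k : ℕ) (a : R2) : subst k a - a ∈ mS := by
  refine MvPolynomial.algHom_sub_mem_of_forall_X (g := AlgHom.id ℂ R2) (fun i => ?_) a
  rw [AlgHom.id_apply]
  rcases eq_or_ne i 4 with rfl | h4
  · rw [subst_X_four, show g k * X 4 + X 1 * X 5 - X 4 = (u - v * d k) * X 4 + X 1 * X 5 by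
      simp only [g]; ring]
    exact add_mem (Ideal.mul_mem_right _ _ (sub_mem u_mem_mS (Ideal.mul_mem_right _ _ v_mem_mS)))
      (Ideal.mul_mem_right _ _ (X_mem_mS (i := 1) (by simp)))
  rcases eq_or_ne i 5 with rfl | h5
  · rw [subst_X_five, add_sub_cancel_left, mul_assoc]
    exact Ideal.mul_mem_right _ _ (X_mem_mS (i := 0) (by simp))
  · rw [subst_X_of_ne k h4 h5, sub_self]
    exact zero_mem _

theorem subst_sub_mem_pow_succ (k n : ℕ) :
    ∀ a ∈ mS ^ n, subst k a - a ∈ mS ^ (n + 1) := by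
  have hfix : ∀ s ∈ ({X 0, X 1, X 2, X 3} : Set R2), subst k s = s := by
    rintro s (rfl | rfl | rfl | rfl) <;> exact subst_X_of_val_le k (by decide)
  exact sub_mem_pow_succ_of_fix_generators (f := (subst k : R2 →+* R2)) (subst_sub_mem k) hfix n

theorem subst_fA (k : ℕ) : subst k fA = fB - X 0 * X 4 ^ 2 * (step (d k) - d k) := by
  simp only [fA, map_add, map_sub, map_mul, subst_X_four, subst_X_five, subst_X_of_ne, ne_eq,
    Fin.reduceEq, not_false_eq_true]
  simp only [fB, g, step, u, v]
  ring

theorem subst_fA_sub_fB_mem (k : ℕ) : subst k fA - fB ∈ mS ^ (k + 1) := by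
  rw [subst_fA, sub_sub_cancel_left, ← d_succ]
  exact neg_mem (Ideal.mul_mem_left _ _ (d_succ_sub_d_mem k))

theorem subst_succ_sub_subst_mem (k : ℕ) (r : R2) :
    subst (k + 1) r - subst k r ∈ mS ^ (k + 1) := by
  refine MvPolynomial.algHom_sub_mem_of_forall_X (fun i => ?_) r
  refine Ideal.span_singleton_le_iff_mem _ |>.mpr (d_succ_sub_d_mem k) <|
    Ideal.mem_span_singleton'.mpr ?_
  rcases eq_or_ne i 4 with rfl | h4
  · exact ⟨-(v * X 4), by simp only [subst_X_four, g]; ring⟩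
  rcases eq_or_ne i 5 with rfl | h5
  · exact ⟨X 0 * X 4, by simp only [subst_X_five]; ring⟩
  · exact ⟨0, by rw [subst_X_of_ne _ h4 h5, subst_X_of_ne _ h4 h5, zero_mul, sub_self]⟩

def phi (k : ℕ) : (R2 ⧸ IA k) ≃ₐ[ℂ] (R2 ⧸ IB k) :=
  quotientSupSpanEquiv (subst_sub_mem_pow_succ k) (k + 1) (subst_fA_sub_fB_mem k)

theorem phi_mk (k : ℕ) (r : R2) :
    phi k (Ideal.Quotient.mk (IA k) r) = Ideal.Quotient.mk (IB k) (subst k r) :=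
  quotientSupSpanEquiv_mk _ _ _ r

end OrdinaryDoublePoint

open OrdinaryDoublePoint

theorem stmt2 :
    ∃ φ : ∀ k : ℕ, (R2 ⧸ IA k) ≃ₐ[ℂ] (R2 ⧸ IB k),
      -- `φ k` is `S_k`-linear, i.e. it fixes the classes of `s₁,s₂,s₃,s₄`
      (∀ k : ℕ, ∀ i : Fin 8, i.val ≤ 3 →
        φ k (Ideal.Quotient.mk (IA k) (X i)) = Ideal.Quotient.mk (IB k) (X i)) ∧
      -- `φ k` fixes `z` and `w`
      (∀ k : ℕ, φ k (Ideal.Quotient.mk (IA k) (X 6)) = Ideal.Quotient.mk (IB k) (X 6)) ∧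
      (∀ k : ℕ, φ k (Ideal.Quotient.mk (IA k) (X 7)) = Ideal.Quotient.mk (IB k) (X 7)) ∧
      -- `φ k` is the identity modulo `(s₁,s₂,s₃,s₄)`
      (∀ k : ℕ, ∀ i : Fin 8,
        φ k (Ideal.Quotient.mk (IA k) (X i)) - Ideal.Quotient.mk (IB k) (X i)
          ∈ mS.map (Ideal.Quotient.mk (IB k))) ∧
      -- the isomorphisms are compatible with the projections `S_{k+1} → S_k`
      (∀ k : ℕ, ∀ r : R2,
        Ideal.Quotient.factor (IBle k)
            (φ (k + 1) (Ideal.Quotient.mk (IA (k + 1)) r))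
          = φ k (Ideal.Quotient.mk (IA k) r)) := by
  refine ⟨phi, fun k i hi => ?_, fun k => ?_, fun k => ?_, fun k i => ?_, fun k r => ?_⟩
  · rw [phi_mk, subst_X_of_val_le k hi]
  · rw [phi_mk, subst_X_of_ne k (by decide) (by decide)]
  · rw [phi_mk, subst_X_of_ne k (by decide) (by decide)]
  · rw [phi_mk, ← map_sub]
    exact Ideal.mem_map_of_mem _ (subst_sub_mem k (X i))
  · rw [phi_mk, phi_mk, Ideal.Quotient.factor_mk, Ideal.Quotient.mk_eq_mk_iff_sub_mem]
    exact Ideal.mem_sup_left (subst_succ_sub_subst_mem k r)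
end
end

section
/- The polar dual P° of the polytope P = conv{±(1,0,0), ±(0,1,0), ±(0,0,1), ±(1,1,0), ±(1,0,1)} is a lattice polytope (P is reflexive), has barycentre at the origin, and has normalised volume 28 (i.e., Euclidean volume 28/6). -/
open MeasureTheory

/-- The ten vertices `±(1,0,0), ±(0,1,0), ±(0,0,1), ±(1,1,0), ±(1,0,1)`. -/
def V7 : Set (Fin 3 → ℝ) :=
  {![1,0,0], ![0,1,0], ![0,0,1], ![1,1,0], ![1,0,1],
   -![1,0,0], -![0,1,0], -![0,0,1], -![1,1,0], -![1,0,1]}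

/-- The polytope `P`. -/
def P7 : Set (Fin 3 → ℝ) := convexHull ℝ V7

/-- The polar dual `P° = {m : ⟨m,n⟩ ≥ -1 for all n ∈ P}`. -/
def Pdual : Set (Fin 3 → ℝ) := {m | ∀ n ∈ P7, -1 ≤ ∑ i, m i * n i}

/-! The ten vertices of `P` give the facet inequalities
`P° = {m : |m₀|, |m₁|, |m₂|, |m₀ + m₁|, |m₀ + m₂| ≤ 1}`. This set is centrally symmetric, which
gives the barycentre, and its half `m₀ ≥ 0` is the image of the unit cube under the trilinear
interpolation of the lattice points `(0, ±1, ±1)` and `(1, -1 or 0, -1 or 0)`, so `P°` is the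
convex hull of these and their negatives. Its slice at `m₀ = u` is a square of side `2 - |u|`,
so `vol P° = ∫_{-1}^{1} (2 - |u|)² du = 14/3`. -/

open Set AffineMap

lemma exists_mem_Icc_lineMap_eq {a b y : ℝ} (hy : y ∈ Icc a b) :
    ∃ s ∈ Icc (0 : ℝ) 1, lineMap a b s = y := by
  rwa [← mem_image, ← segment_eq_image_lineMap, segment_eq_Icc (hy.1.trans hy.2)]

lemma setIntegral_id_eq_zero_of_neg_eq {E : Type*} [NormedAddCommGroup E] [NormedSpace ℝ E]
    [MeasurableSpace E] [MeasurableNeg E] (μ : Measure E) [μ.IsNegInvariant] {s : Set E}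
    (hs : -s = s) : ∫ x in s, x ∂μ = 0 := by
  have h := (Measure.measurePreserving_neg μ).setIntegral_preimage_emb
    (MeasurableEquiv.neg E).measurableEmbedding id s
  change ∫ x in -s, -x ∂μ = ∫ x in s, x ∂μ at h
  rw [hs, integral_neg] at h
  linear_combination (norm := module) (-2⁻¹ : ℝ) • h

lemma volume_eq_lintegral_volume_cons {n : ℕ} {s : Set (Fin (n + 1) → ℝ)}
    (hs : MeasurableSet s) : volume s = ∫⁻ u, volume {v : Fin n → ℝ | Fin.cons u v ∈ s} := by
  have e := (volume_preserving_piFinSuccAbove (fun _ : Fin (n + 1) => ℝ) 0).symm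
  rw [← e.measure_preimage hs.nullMeasurableSet, Measure.volume_eq_prod,
    Measure.prod_apply (e.measurable hs)]
  simp only [MeasurableEquiv.piFinSuccAbove_symm_apply, Fin.insertNthEquiv_zero]
  rfl

lemma integral_two_sub_abs_sq : ∫ u in (-1 : ℝ)..1, (2 - |u|) ^ 2 = 14 / 3 := by
  have hc : Continuous fun u : ℝ => (2 - |u|) ^ 2 := by fun_prop
  rw [← intervalIntegral.integral_add_adjacent_intervals (b := 0) (hc.intervalIntegrable _ _)
    (hc.intervalIntegrable _ _)]
  have hneg : ∫ u in (-1 : ℝ)..0, (2 - |u|) ^ 2 = ∫ u in (-1 : ℝ)..0, (2 + u) ^ 2 :=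
    intervalIntegral.integral_congr fun u hu => by
      rw [uIcc_of_le (by norm_num)] at hu
      rw [abs_of_nonpos hu.2, sub_neg_eq_add]
  have hpos : ∫ u in (0 : ℝ)..1, (2 - |u|) ^ 2 = ∫ u in (0 : ℝ)..1, (2 - u) ^ 2 :=
    intervalIntegral.integral_congr fun u hu => by
      rw [uIcc_of_le (by norm_num)] at hu
      rw [abs_of_nonneg hu.1]
  rw [hneg, hpos, intervalIntegral.integral_comp_add_left (fun x => x ^ 2),
    intervalIntegral.integral_comp_sub_left (fun x => x ^ 2), integral_pow, integral_pow]
  norm_num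

lemma convex_Pdual : Convex ℝ Pdual := by
  simp only [Pdual, ofPred_forall]
  exact convex_iInter₂ fun n _ =>
    convex_halfSpace_ge ⟨fun x y => add_dotProduct x y n, fun c x => smul_dotProduct c x n⟩ (-1)

lemma mem_Pdual_iff {m : Fin 3 → ℝ} :
    m ∈ Pdual ↔ |m 0| ≤ 1 ∧ |m 1| ≤ 1 ∧ |m 2| ≤ 1 ∧ |m 0 + m 1| ≤ 1 ∧ |m 0 + m 2| ≤ 1 := by
  have hull : m ∈ Pdual ↔ V7 ⊆ {n | -1 ≤ m ⬝ᵥ n} :=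
    (convex_halfSpace_ge ⟨dotProduct_add m, fun c x => dotProduct_smul c m x⟩
      (-1)).convexHull_subset_iff
  rw [hull]
  simp only [V7, Matrix.neg_cons, neg_zero, Matrix.neg_empty, dotProduct, Fin.sum_univ_three,
    insert_subset_iff, singleton_subset_iff, mem_ofPred_eq, Matrix.cons_val_zero,
    Matrix.cons_val_one, Matrix.cons_val, mul_one, mul_zero, add_zero, zero_add, mul_neg,
    neg_le_neg_iff, le_add_neg_iff_add_le, neg_add_le_iff_le_add, abs_le]
  rw [add_comm (m 1), add_comm (m 2)]
  tauto

lemma neg_Pdual : -Pdual = Pdual := by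
  ext m
  simp only [mem_neg, mem_Pdual_iff, Pi.neg_apply, ← neg_add, abs_neg]

def dualLatticeVertices : Finset (Fin 3 → ℤ) :=
  {![0,1,1], ![0,1,-1], ![0,-1,1], ![0,-1,-1],
   ![1,0,0], ![1,0,-1], ![1,-1,0], ![1,-1,-1],
   ![-1,0,0], ![-1,0,1], ![-1,1,0], ![-1,1,1]}

def dualVertices : Set (Fin 3 → ℝ) :=
  {![0,1,1], ![0,1,-1], ![0,-1,1], ![0,-1,-1],
   ![1,0,0], ![1,0,-1], ![1,-1,0], ![1,-1,-1],
   ![-1,0,0], ![-1,0,1], ![-1,1,0], ![-1,1,1]}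

lemma image_intCast_dualLatticeVertices :
    (fun z : Fin 3 → ℤ => fun i => (z i : ℝ)) '' ↑dualLatticeVertices = dualVertices := by
  have hc : ∀ a b c : ℤ, (fun i => ((![a, b, c] : Fin 3 → ℤ) i : ℝ)) = ![(a : ℝ), b, c] := by
    intro a b c; funext i; fin_cases i <;> simp
  simp only [dualLatticeVertices, dualVertices, Finset.coe_insert, Finset.coe_singleton,
    image_insert_eq, image_singleton, hc, Int.cast_zero, Int.cast_one, Int.cast_neg]

lemma neg_dualVertices : -dualVertices = dualVertices := by
  ext v
  simp only [dualVertices, mem_neg, mem_insert_iff, mem_singleton_iff, neg_eq_iff_eq_neg,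
    Matrix.neg_cons, Matrix.neg_empty, neg_zero, neg_neg]
  tauto

lemma dualVertices_subset_Pdual : dualVertices ⊆ Pdual := by
  intro v hv
  simp only [dualVertices, mem_insert_iff, mem_singleton_iff] at hv
  rcases hv with rfl | rfl | rfl | rfl | rfl | rfl | rfl | rfl | rfl | rfl | rfl | rfl <;>
    norm_num [mem_Pdual_iff, Matrix.cons_val_two]

lemma mem_convexHull_dualVertices_of_nonneg {m : Fin 3 → ℝ} (hm : m ∈ Pdual) (hm0 : 0 ≤ m 0) :
    m ∈ convexHull ℝ dualVertices := by
  obtain ⟨h0, h1, h2, h01, h02⟩ := mem_Pdual_iff.1 hm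
  rw [abs_le] at h0 h1 h2 h01 h02
  obtain ⟨s, hs, hy⟩ := exists_mem_Icc_lineMap_eq (a := -1) (b := 1 - m 0) (y := m 1)
    ⟨h1.1, by linarith⟩
  obtain ⟨t, ht, hz⟩ := exists_mem_Icc_lineMap_eq (a := -1) (b := 1 - m 0) (y := m 2)
    ⟨h2.1, by linarith⟩
  have hK := convex_convexHull ℝ dualVertices
  have corner : ∀ v ∈ dualVertices, v ∈ convexHull ℝ dualVertices := subset_convexHull ℝ _
  have hmem := hK.lineMap_mem
    (hK.lineMap_mem
      (hK.lineMap_mem (corner ![0, -1, -1] (by simp [dualVertices]))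
        (corner ![0, -1, 1] (by simp [dualVertices])) ht)
      (hK.lineMap_mem (corner ![0, 1, -1] (by simp [dualVertices]))
        (corner ![0, 1, 1] (by simp [dualVertices])) ht) hs)
    (hK.lineMap_mem
      (hK.lineMap_mem (corner ![1, -1, -1] (by simp [dualVertices]))
        (corner ![1, -1, 0] (by simp [dualVertices])) ht)
      (hK.lineMap_mem (corner ![1, 0, -1] (by simp [dualVertices]))
        (corner ![1, 0, 0] (by simp [dualVertices])) ht) hs) ⟨hm0, h0.2⟩
  convert hmem using 1
  simp only [lineMap_apply_module, smul_eq_mul] at hy hz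
  ext i
  fin_cases i <;> simp [lineMap_apply_module] <;> linarith

lemma Pdual_eq_convexHull_dualVertices : Pdual = convexHull ℝ dualVertices := by
  refine Subset.antisymm (fun m hm => ?_) ?_
  · rcases le_total 0 (m 0) with h | h
    · exact mem_convexHull_dualVertices_of_nonneg hm h
    · have hneg := mem_convexHull_dualVertices_of_nonneg
        (by rw [← neg_Pdual]; exact neg_mem_neg.2 hm) (by simpa)
      rwa [← neg_dualVertices, convexHull_neg, mem_neg]
  · exact convex_Pdual.convexHull_subset_iff.2 dualVertices_subset_Pdual

lemma measurableSet_Pdual : MeasurableSet Pdual := by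
  rw [Pdual_eq_convexHull_dualVertices]
  have hfin : dualVertices.Finite :=
    image_intCast_dualLatticeVertices ▸ dualLatticeVertices.finite_toSet.image _
  exact (hfin.isCompact_convexHull ℝ).isClosed.measurableSet

lemma volume_cons_mem_Pdual (u : ℝ) :
    volume {v : Fin 2 → ℝ | Fin.cons u v ∈ Pdual} =
      (Icc (-1) 1).indicator (fun u => ENNReal.ofReal ((2 - |u|) ^ 2)) u := by
  by_cases hu : u ∈ Icc (-1 : ℝ) 1
  · have hslice : {v : Fin 2 → ℝ | Fin.cons u v ∈ Pdual} =
        Icc (fun _ => max (-1) (-1 - u)) (fun _ => min 1 (1 - u)) := by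
      ext v
      have hv2 : (Fin.cons u v : Fin 3 → ℝ) 2 = v 1 := rfl
      simp only [Nat.reduceAdd, mem_ofPred_eq, mem_Pdual_iff, Fin.cons_zero, Fin.cons_one, hv2,
        abs_le, mem_Icc, Pi.le_def, Fin.forall_fin_two, sup_le_iff, le_inf_iff]
      grind
    have hlen : min 1 (1 - u) - max (-1) (-1 - u) = 2 - |u| := by
      rcases le_total 0 u with h | h
      · rw [abs_of_nonneg h, min_eq_right (by linarith), max_eq_left (by linarith)]
        ring
      · rw [abs_of_nonpos h, min_eq_left (by linarith), max_eq_right (by linarith)]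
        ring
    rw [indicator_of_mem hu, hslice, Real.volume_Icc_pi, hlen, Finset.prod_const,
      Finset.card_univ, Fintype.card_fin, ← ENNReal.ofReal_pow (by linarith [abs_le.2 hu])]
  · have hempty : {v : Fin 2 → ℝ | Fin.cons u v ∈ Pdual} = ∅ :=
      eq_empty_of_forall_notMem fun v hv => hu (abs_le.1 (by simpa using (mem_Pdual_iff.1 hv).1))
    rw [indicator_of_notMem hu, hempty, measure_empty]

lemma volume_Pdual : volume Pdual = ENNReal.ofReal (28 / 6) := by
  rw [volume_eq_lintegral_volume_cons measurableSet_Pdual]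
  simp_rw [volume_cons_mem_Pdual]
  rw [lintegral_indicator measurableSet_Icc, ← ofReal_integral_eq_lintegral_ofReal
    (by fun_prop : Continuous fun u : ℝ => (2 - |u|) ^ 2).integrableOn_Icc
    (Filter.Eventually.of_forall fun u => by positivity), integral_Icc_eq_integral_Ioc,
    ← intervalIntegral.integral_of_le (by norm_num), integral_two_sub_abs_sq]
  norm_num

theorem stmt7 :
    -- `P°` is a lattice polytope, i.e. `P` is reflexive
    (∃ S : Finset (Fin 3 → ℤ),
      Pdual = convexHull ℝ ((fun z : Fin 3 → ℤ => fun i => (z i : ℝ)) '' ↑S)) ∧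
    -- the barycentre of `P°` is the origin
    (∫ x in Pdual, x ∂volume) = 0 ∧
    -- `P°` has Euclidean volume `28/6`, i.e. normalised volume `28`
    volume Pdual = ENNReal.ofReal (28 / 6) := by
  refine ⟨⟨dualLatticeVertices, ?_⟩, setIntegral_id_eq_zero_of_neg_eq volume neg_Pdual,
    volume_Pdual⟩
  rw [image_intCast_dualLatticeVertices, Pdual_eq_convexHull_dualVertices]
end

section
/- The group of matrices g ∈ GL_3(Z) satisfying g(P) = P, where P = conv{±(1,0,0), ±(0,1,0), ±(0,0,1), ±(1,1,0), ±(1,0,1)}, has order 16 and is generated by the matrices g1 = [[-1,1,1],[0,1,0],[0,0,1]], g2 = [[1,0,0],[0,0,1],[0,1,0]], g3 = [[1,-1,0],[0,0,1],[0,-1,0]]; moreover g1 and g2 have order 2 and g3 has order 4, and the group is isomorphic to a semidirect product D8 ⋊ C2. -/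
open Matrix

/-- The ten vertices `±(1,0,0), ±(0,1,0), ±(0,0,1), ±(1,1,0), ±(1,0,1)`. -/
def V8 : Set (Fin 3 → ℝ) :=
  {![1,0,0], ![0,1,0], ![0,0,1], ![1,1,0], ![1,0,1],
   -![1,0,0], -![0,1,0], -![0,0,1], -![1,1,0], -![1,0,1]}

/-- The polytope `P`. -/
def P8 : Set (Fin 3 → ℝ) := convexHull ℝ V8

def M1 : Matrix (Fin 3) (Fin 3) ℤ := !![-1,1,1; 0,1,0; 0,0,1]
def M2 : Matrix (Fin 3) (Fin 3) ℤ := !![1,0,0; 0,0,1; 0,1,0]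
def M3 : Matrix (Fin 3) (Fin 3) ℤ := !![1,-1,0; 0,0,1; 0,-1,0]
def M3inv : Matrix (Fin 3) (Fin 3) ℤ := !![1,0,-1; 0,0,-1; 0,1,0]

def g1 : Matrix.GeneralLinearGroup (Fin 3) ℤ :=
  ⟨M1, M1, by norm_num [M1, Matrix.mul_fin_three] <;> exact Matrix.one_fin_three.symm,
    by norm_num [M1, Matrix.mul_fin_three] <;> exact Matrix.one_fin_three.symm⟩

def g2 : Matrix.GeneralLinearGroup (Fin 3) ℤ :=
  ⟨M2, M2, by norm_num [M2, Matrix.mul_fin_three] <;> exact Matrix.one_fin_three.symm,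
    by norm_num [M2, Matrix.mul_fin_three] <;> exact Matrix.one_fin_three.symm⟩

def g3 : Matrix.GeneralLinearGroup (Fin 3) ℤ :=
  ⟨M3, M3inv, by norm_num [M3, M3inv, Matrix.mul_fin_three] <;> exact Matrix.one_fin_three.symm,
    by norm_num [M3, M3inv, Matrix.mul_fin_three] <;> exact Matrix.one_fin_three.symm⟩

/-- `g ∈ GL₃(ℤ)` preserves `P`, acting on `ℝ³` via the cast of its matrix. -/
def PreservesP (g : Matrix.GeneralLinearGroup (Fin 3) ℤ) : Prop :=
  (fun v : Fin 3 → ℝ => ((g : Matrix (Fin 3) (Fin 3) ℤ).map (Int.cast : ℤ → ℝ)).mulVec v) '' P8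
    = P8


/-!
The lattice points of `P` are `0` and its ten vertices, since `P` is cut out by the inequalities
`|⟪a, x⟫| ≤ 1` for six integral normals `a`. Hence an automorphism of `P` permutes the vertices;
it is determined by its columns, which are vertices, and it also sends `e₁ + e₂` and `e₁ + e₃` to
vertices. A finite search leaves exactly sixteen invertible matrices, and these are the image of
the embedding `DihedralGroup 4 × C₂ → GL₃(ℤ)` given by `r ↦ g3`, `s ↦ g3 g2` and the central
element `g1 g3²`. The semidirect product is therefore the one with trivial action.
-/

section IntCast

variable {R : Type*} [Ring R] {m n : Type*} [Fintype n]

lemma intCast_comp_dotProduct (a v : n → ℤ) :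
    (Int.cast ∘ a : n → R) ⬝ᵥ (Int.cast ∘ v) = ((a ⬝ᵥ v : ℤ) : R) := by
  simpa using (RingHom.map_dotProduct (Int.castRingHom R) a v).symm

lemma map_intCast_mulVec (A : Matrix m n ℤ) (v : n → ℤ) :
    A.map (Int.cast : ℤ → R) *ᵥ (Int.cast ∘ v) = Int.cast ∘ (A *ᵥ v) := by
  funext i
  simpa using (RingHom.map_mulVec (Int.castRingHom R) A v i).symm

end IntCast

lemma abs_le_of_mem_convexHull {E : Type*} [AddCommGroup E] [Module ℝ E] {s : Set E}
    (f : E →ₗ[ℝ] ℝ) {c : ℝ} (hs : ∀ v ∈ s, |f v| ≤ c) {x : E} (hx : x ∈ convexHull ℝ s) :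
    |f x| ≤ c := by
  have hconv : Convex ℝ (f ⁻¹' Set.Icc (-c) c) := (convex_Icc (-c) c).linear_preimage f
  have hsub : s ⊆ f ⁻¹' Set.Icc (-c) c := fun v hv => abs_le.mp (hs v hv)
  exact abs_le.mpr (convexHull_min hsub hconv hx)

def vertsZ : Finset (Fin 3 → ℤ) :=
  {![1,0,0], ![0,1,0], ![0,0,1], ![1,1,0], ![1,0,1],
   ![-1,0,0], ![0,-1,0], ![0,0,-1], ![-1,-1,0], ![-1,0,-1]}

lemma V8_eq_image_vertsZ : V8 = (Int.cast ∘ ·) '' (vertsZ : Set (Fin 3 → ℤ)) := by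
  ext x
  simp only [V8, vertsZ, Finset.coe_insert, Finset.coe_singleton, Set.image_insert_eq,
    Set.image_singleton]
  norm_num [funext_iff, Fin.forall_fin_succ]

def facetNormals : Finset (Fin 3 → ℤ) :=
  {![1,0,0], ![1,0,-1], ![1,-1,0], ![1,-1,-1], ![0,1,1], ![0,1,-1]}

lemma abs_dotProduct_le_one_of_mem_P8 {a : Fin 3 → ℤ} (ha : a ∈ facetNormals)
    {x : Fin 3 → ℝ} (hx : x ∈ P8) : |(Int.cast ∘ a) ⬝ᵥ x| ≤ 1 := by
  refine abs_le_of_mem_convexHull (dotProductBilin ℝ ℝ (Int.cast ∘ a)) ?_ hx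
  rw [V8_eq_image_vertsZ]
  rintro _ ⟨v, hv, rfl⟩
  have hav : |a ⬝ᵥ v| ≤ 1 := by revert a v; decide
  rw [dotProductBilin_apply_apply, intCast_comp_dotProduct]
  exact_mod_cast hav

lemma eq_zero_or_mem_vertsZ {w : Fin 3 → ℤ} (hw : ∀ a ∈ facetNormals, |a ⬝ᵥ w| ≤ 1) :
    w = 0 ∨ w ∈ vertsZ := by
  have hbox : w ∈ Fintype.piFinset fun _ => Finset.Icc (-1 : ℤ) 1 := by
    have h0 := hw ![1,0,0] (by decide)
    have h1 := hw ![0,1,1] (by decide)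
    have h2 := hw ![0,1,-1] (by decide)
    simp only [dotProduct, Fin.sum_univ_three, cons_val_zero, cons_val_one, cons_val_two,
      tail_cons, head_cons, abs_le] at h0 h1 h2
    simp only [Fintype.mem_piFinset, Fin.forall_fin_succ, Fin.succ_zero_eq_one,
      Fin.succ_one_eq_two, IsEmpty.forall_iff, and_true, Finset.mem_Icc]
    omega
  have hsearch : ∀ w ∈ Fintype.piFinset fun _ => Finset.Icc (-1 : ℤ) 1,
      (∀ a ∈ facetNormals, |a ⬝ᵥ w| ≤ 1) → w = 0 ∨ w ∈ vertsZ := by decide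
  exact hsearch w hbox hw

lemma eq_zero_or_mem_vertsZ_of_mem_P8 {w : Fin 3 → ℤ} (hw : Int.cast ∘ w ∈ P8) :
    w = 0 ∨ w ∈ vertsZ :=
  eq_zero_or_mem_vertsZ fun a ha => by
    have h := abs_dotProduct_le_one_of_mem_P8 ha hw
    rw [intCast_comp_dotProduct] at h
    exact_mod_cast h

lemma mulVec_mem_vertsZ_of_preservesP {g : GL (Fin 3) ℤ} (hg : PreservesP g) {v : Fin 3 → ℤ}
    (hv : v ∈ vertsZ) : (g : Matrix (Fin 3) (Fin 3) ℤ) *ᵥ v ∈ vertsZ := by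
  have hP : Int.cast ∘ ((g : Matrix (Fin 3) (Fin 3) ℤ) *ᵥ v) ∈ P8 := by
    rw [← hg, ← map_intCast_mulVec]
    refine Set.mem_image_of_mem _ (subset_convexHull ℝ V8 ?_)
    rw [V8_eq_image_vertsZ]
    exact Set.mem_image_of_mem _ hv
  refine (eq_zero_or_mem_vertsZ_of_mem_P8 hP).resolve_left fun h0 => ?_
  have hv0 : v = 0 :=
    Matrix.mulVec_injective_of_isUnit g.isUnit (h0.trans (Matrix.mulVec_zero _).symm)
  exact absurd (hv0 ▸ hv) (by decide)

lemma preservesP_of_image_vertsZ {g : GL (Fin 3) ℤ}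
    (h : vertsZ.image ((g : Matrix (Fin 3) (Fin 3) ℤ) *ᵥ ·) = vertsZ) : PreservesP g := by
  set M := (g : Matrix (Fin 3) (Fin 3) ℤ).map (Int.cast : ℤ → ℝ)
  have hcomp : M.mulVecLin ∘ (Int.cast ∘ ·) =
      (Int.cast ∘ ·) ∘ ((g : Matrix (Fin 3) (Fin 3) ℤ) *ᵥ ·) :=
    funext fun v => map_intCast_mulVec _ v
  change M.mulVecLin '' convexHull ℝ V8 = convexHull ℝ V8
  rw [LinearMap.image_convexHull, V8_eq_image_vertsZ, ← Set.image_comp, hcomp,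
    Set.image_comp, ← Finset.coe_image, h]

def dihedralRep : DihedralGroup 4 →* GL (Fin 3) ℤ :=
  MonoidHom.mk' (fun
    | .r i => g3 ^ i.val
    | .sr i => g3 * g2 * g3 ^ i.val) (by decide)

def centralRep : Multiplicative (ZMod 2) →* GL (Fin 3) ℤ :=
  MonoidHom.mk' (fun c => (g1 * g3 ^ 2) ^ c.toAdd.val) (by decide)

def autRep : DihedralGroup 4 × Multiplicative (ZMod 2) →* GL (Fin 3) ℤ :=
  dihedralRep.noncommCoprod centralRep fun d c => by
    revert d c
    unfold Commute SemiconjBy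
    decide

lemma autRep_injective : Function.Injective autRep :=
  (injective_iff_map_eq_one autRep).mpr (by decide)

lemma exists_autRep_eq {A : Matrix (Fin 3) (Fin 3) ℤ} (hA : ∀ v ∈ vertsZ, A *ᵥ v ∈ vertsZ)
    (hdet : A.det ≠ 0) : ∃ x, (autRep x : Matrix (Fin 3) (Fin 3) ℤ) = A := by
  -- 64 integer matrices map the vertices into themselves; 48 of them are singular.
  have hsearch : ∀ c₀ ∈ vertsZ, ∀ c₁ ∈ vertsZ, ∀ c₂ ∈ vertsZ, c₀ + c₁ ∈ vertsZ →
      c₀ + c₂ ∈ vertsZ → (Matrix.of ![c₀, c₁, c₂])ᵀ.det ≠ 0 →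
      ∃ x, (autRep x : Matrix (Fin 3) (Fin 3) ℤ) = (Matrix.of ![c₀, c₁, c₂])ᵀ := by
    simp only [Matrix.det_fin_three]
    decide +kernel
  have hcol (j : Fin 3) : A.col j = A *ᵥ Pi.single j 1 := (Matrix.mulVec_single_one A j).symm
  have hsum (j : Fin 3) : A.col 0 + A.col j = A *ᵥ (Pi.single 0 1 + Pi.single j 1) := by
    rw [Matrix.mulVec_add, hcol, hcol]
  have hA_eq : A = (Matrix.of ![A.col 0, A.col 1, A.col 2])ᵀ := by
    ext i j; fin_cases j <;> rfl
  rw [hA_eq] at hdet ⊢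
  exact hsearch _ (hcol 0 ▸ hA _ (by decide)) _ (hcol 1 ▸ hA _ (by decide))
    _ (hcol 2 ▸ hA _ (by decide)) (hsum 1 ▸ hA _ (by decide)) (hsum 2 ▸ hA _ (by decide)) hdet

lemma image_vertsZ_autRep (x : DihedralGroup 4 × Multiplicative (ZMod 2)) :
    vertsZ.image ((autRep x : Matrix (Fin 3) (Fin 3) ℤ) *ᵥ ·) = vertsZ := by
  revert x
  decide +kernel

lemma preservesP_iff_mem_range_autRep {g : GL (Fin 3) ℤ} : PreservesP g ↔ g ∈ autRep.range := by
  refine ⟨fun hg => ?_, ?_⟩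
  · have hdet := ((Matrix.isUnit_iff_isUnit_det _).mp g.isUnit).ne_zero
    obtain ⟨x, hx⟩ := exists_autRep_eq (fun v => mulVec_mem_vertsZ_of_preservesP hg) hdet
    exact ⟨x, Units.ext hx⟩
  · rintro ⟨x, rfl⟩
    exact preservesP_of_image_vertsZ (image_vertsZ_autRep x)

lemma range_autRep : autRep.range = Subgroup.closure {g1, g2, g3} := by
  have m1 : g1 ∈ Subgroup.closure {g1, g2, g3} := Subgroup.subset_closure (by simp)
  have m2 : g2 ∈ Subgroup.closure {g1, g2, g3} := Subgroup.subset_closure (by simp)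
  have m3 : g3 ∈ Subgroup.closure {g1, g2, g3} := Subgroup.subset_closure (by simp)
  refine le_antisymm ?_ ((Subgroup.closure_le _).mpr ?_)
  · rintro _ ⟨⟨d, c⟩, rfl⟩
    refine mul_mem ?_ (pow_mem (mul_mem m1 (pow_mem m3 2)) _)
    cases d with
    | r i => exact pow_mem m3 _
    | sr i => exact mul_mem (mul_mem m3 m2) (pow_mem m3 _)
  · simp only [Set.insert_subset_iff, Set.singleton_subset_iff, SetLike.mem_coe,
      MonoidHom.mem_range]
    decide

lemma orderOf_g1 : orderOf g1 = 2 := orderOf_eq_prime (by decide) (by decide)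

lemma orderOf_g2 : orderOf g2 = 2 := orderOf_eq_prime (by decide) (by decide)

lemma orderOf_g3 : orderOf g3 = 4 := orderOf_eq_prime_pow (p := 2) (n := 1) (by decide) (by decide)

theorem stmt8 :
    Nat.card {g : Matrix.GeneralLinearGroup (Fin 3) ℤ // PreservesP g} = 16 ∧
    {g : Matrix.GeneralLinearGroup (Fin 3) ℤ | PreservesP g}
      = ↑(Subgroup.closure {g1, g2, g3}) ∧
    orderOf g1 = 2 ∧ orderOf g2 = 2 ∧ orderOf g3 = 4 ∧
    (∃ φ : Multiplicative (ZMod 2) →* MulAut (DihedralGroup 4),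
      Nonempty ((Subgroup.closure {g1, g2, g3} :
          Subgroup (Matrix.GeneralLinearGroup (Fin 3) ℤ))
        ≃* (DihedralGroup 4 ⋊[φ] Multiplicative (ZMod 2)))) := by
  have hcard : Nat.card {g : GL (Fin 3) ℤ // PreservesP g} = 16 := calc
    _ = Nat.card autRep.range :=
      Nat.card_congr (Equiv.subtypeEquivRight fun _ => preservesP_iff_mem_range_autRep)
    _ = Nat.card (DihedralGroup 4 × Multiplicative (ZMod 2)) :=
      (Nat.card_congr (MonoidHom.ofInjective autRep_injective).toEquiv).symm
    _ = 16 := by simp [DihedralGroup.card]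
  refine ⟨hcard, ?_, orderOf_g1, orderOf_g2, orderOf_g3, 1, ⟨?_⟩⟩
  · ext g
    rw [Set.mem_ofPred_eq, preservesP_iff_mem_range_autRep, range_autRep, SetLike.mem_coe]
  · exact (MulEquiv.subgroupCongr range_autRep.symm).trans
      ((MonoidHom.ofInjective autRep_injective).symm.trans SemidirectProduct.mulEquivProd.symm)
end

section
/- Let G be the group acting on C[[t_α, t_β, t_γ, t_δ]] generated by the 3-torus acting diagonally with weights (0,1,1), (0,1,−1), (0,−1,−1), (0,−1,1), the involution swapping t_β and t_δ and fixing t_α, t_γ, and the order-4 substitution t_α ↦ −t_β, t_β ↦ t_γ, t_γ ↦ t_δ, t_δ ↦ −t_α. Then the ring of G-invariants equals C[[t_α·t_β·t_γ·t_δ, t_α·t_γ − t_β·t_δ]], a formal power series ring in 2 indeterminates. -/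
noncomputable section

/-- `ℂ[[t_α, t_β, t_γ, t_δ]]`, with `0,1,2,3 ↦ α,β,γ,δ`. -/
abbrev PS4 : Type := MvPowerSeries (Fin 4) ℂ

/-- The weights `(0,1,1), (0,1,−1), (0,−1,−1), (0,−1,1)` of `t_α,t_β,t_γ,t_δ`. -/
def w13 : Fin 4 → Fin 3 → ℤ := ![![0,1,1], ![0,1,-1], ![0,-1,-1], ![0,-1,1]]

/-- The diagonal action of the torus `(ℂ*)³` on `ℂ[[t_α,t_β,t_γ,t_δ]]`. -/
def actT (lam : Fin 3 → ℂˣ) (f : PS4) : PS4 :=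
  fun d : Fin 4 →₀ ℕ =>
    (∏ j : Fin 3, (lam j : ℂ) ^ (∑ i : Fin 4, (d i : ℤ) * w13 i j)) *
      MvPowerSeries.coeff d f

/-- The involution swapping `t_β` and `t_δ` and fixing `t_α, t_γ`. -/
def actG2 (f : PS4) : PS4 :=
  fun d : Fin 4 →₀ ℕ =>
    MvPowerSeries.coeff (Finsupp.equivMapDomain (Equiv.swap (1 : Fin 4) 3) d) f

/-- The order-4 substitution `t_α ↦ −t_β, t_β ↦ t_γ, t_γ ↦ t_δ, t_δ ↦ −t_α`. -/
def actG3 (f : PS4) : PS4 :=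
  fun d : Fin 4 →₀ ℕ =>
    (-1 : ℂ) ^ (d 0 + d 1) *
      MvPowerSeries.coeff (Finsupp.equivMapDomain (finRotate 4).symm d) f

/-!
Put `u = t_α t_γ` and `v = t_β t_δ`. The torus invariants are exactly the power series in `u` and
`v`; on these the involution acts trivially and the order-4 substitution acts by
`(u, v) ↦ (-v, -u)`, i.e. `u^a v^b ↦ (-1)^(a+b) u^b v^a`. Expressing such a series in `uv` and
`u - v` is a triangular system with diagonal entries `±1`: the coefficient of `u^a v^(a+n)` in
`(uv)^m (u - v)^k` vanishes for `m > a` and equals `(-1)^n` for `(m, k) = (a, n)`. This gives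
injectivity, and surjectivity onto the `(u, v) ↦ (-v, -u)`-invariants by recursion on `a`.
-/

open MvPowerSeries Finset

section

variable {R : Type*} [CommRing R]

def uvExp (a b : ℕ) : Fin 2 →₀ ℕ := Finsupp.equivFunOnFinite.symm ![a, b]

@[simp] lemma uvExp_apply_zero (a b : ℕ) : uvExp a b 0 = a := rfl

@[simp] lemma uvExp_apply_one (a b : ℕ) : uvExp a b 1 = b := rfl

lemma uvExp_inj {a b c d : ℕ} : uvExp a b = uvExp c d ↔ a = c ∧ b = d := by
  refine ⟨fun h => ⟨?_, ?_⟩, fun ⟨hac, hbd⟩ => hac ▸ hbd ▸ rfl⟩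
  · simpa using DFunLike.congr_fun h 0
  · simpa using DFunLike.congr_fun h 1

lemma uvExp_eta (e : Fin 2 →₀ ℕ) : uvExp (e 0) (e 1) = e :=
  Finsupp.ext fun i => by fin_cases i <;> rfl

lemma ext_uvExp {f g : MvPowerSeries (Fin 2) R}
    (h : ∀ a b, coeff (uvExp a b) f = coeff (uvExp a b) g) : f = g :=
  ext fun e => by rw [← uvExp_eta e]; exact h _ _

lemma X_zero_pow_mul_X_one_pow (a b : ℕ) :
    (X 0 ^ a * X 1 ^ b : MvPowerSeries (Fin 2) R) = monomial (uvExp a b) 1 := by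
  rw [X_pow_eq, X_pow_eq, monomial_mul_monomial, mul_one]
  congr 2
  exact Finsupp.ext fun i => by fin_cases i <;> simp

lemma coeff_X_sub_X_pow (i j n : ℕ) :
    coeff (uvExp i j) ((X 0 - X 1) ^ n : MvPowerSeries (Fin 2) R) =
      if i + j = n then (-1) ^ j * (n.choose i : R) else 0 := by
  have hterm (k : ℕ) : (X 0 ^ k * (-X 1) ^ (n - k) * (n.choose k : MvPowerSeries (Fin 2) R)) =
      C ((-1) ^ (n - k) * (n.choose k : R)) * monomial (uvExp k (n - k)) 1 := by
    rw [← X_zero_pow_mul_X_one_pow, neg_pow, map_mul, map_pow, map_neg, map_one, map_natCast]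
    ring
  simp_rw [sub_eq_add_neg, add_pow, map_sum, hterm, coeff_C_mul, coeff_monomial, uvExp_inj]
  split_ifs with h
  · rw [sum_eq_single i]
    · simp [← h]
    · intro k _ hk
      simp [Ne.symm hk]
    · intro hi
      simp only [mem_range, not_lt] at hi
      omega
  · refine sum_eq_zero fun k hk => ?_
    simp only [mem_range] at hk
    rw [if_neg (by omega), mul_zero]

variable (R) in
def mulSubPow (m n : ℕ) : MvPowerSeries (Fin 2) R := (X 0 * X 1) ^ m * (X 0 - X 1) ^ n

lemma coeff_mulSubPow (m n a b : ℕ) :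
    coeff (uvExp a b) (mulSubPow R m n) =
      if m ≤ a ∧ m ≤ b ∧ a + b = 2 * m + n then (-1) ^ (b - m) * (n.choose (a - m) : R)
      else 0 := by
  have hsub : uvExp a b - uvExp m m = uvExp (a - m) (b - m) :=
    Finsupp.ext fun i => by fin_cases i <;> rfl
  have hle : uvExp m m ≤ uvExp a b ↔ m ≤ a ∧ m ≤ b := by
    simp [Finsupp.le_def, Fin.forall_fin_two]
  rw [mulSubPow, mul_pow, X_zero_pow_mul_X_one_pow, coeff_monomial_mul, one_mul, hsub,
    coeff_X_sub_X_pow]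
  by_cases h : m ≤ a ∧ m ≤ b
  · simp only [hle, h, true_and, if_true]
    congr 1
    exact propext (by omega)
  · simp only [hle, h, if_false]
    rw [if_neg (by tauto)]

lemma le_of_coeff_mulSubPow_ne_zero {m n a b : ℕ}
    (h : coeff (uvExp a b) (mulSubPow R m n) ≠ 0) :
    m ≤ a ∧ m ≤ b ∧ a + b = 2 * m + n := by
  rw [coeff_mulSubPow] at h
  by_contra hc
  exact h (if_neg hc)

lemma coeff_mulSubPow_diag (a n : ℕ) : coeff (uvExp a (a + n)) (mulSubPow R a n) = (-1) ^ n := by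
  rw [coeff_mulSubPow, if_pos (by omega)]
  simp

lemma coeff_mulSubPow_swap (m n a b : ℕ) :
    coeff (uvExp a b) (mulSubPow R m n) =
      (-1) ^ (a + b) * coeff (uvExp b a) (mulSubPow R m n) := by
  rw [coeff_mulSubPow, coeff_mulSubPow]
  by_cases h : m ≤ a ∧ m ≤ b ∧ a + b = 2 * m + n
  · rw [if_pos h, if_pos (by omega),
      Nat.choose_symm_of_eq_add (show n = (a - m) + (b - m) by omega), ← mul_assoc, ← pow_add]
    congr 1
    rw [show a + b + (a - m) = (b - m) + 2 * a by omega, pow_add, pow_mul]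
    simp
  · rw [if_neg h, if_neg (by omega), mul_zero]

lemma hasSubst_mulSub : HasSubst (![X 0 * X 1, X 0 - X 1] : Fin 2 → MvPowerSeries (Fin 2) R) :=
  hasSubst_of_constantCoeff_zero fun s => by fin_cases s <;> simp

variable (R) in
def substMulSub : MvPowerSeries (Fin 2) R →ₐ[R] MvPowerSeries (Fin 2) R :=
  substAlgHom hasSubst_mulSub

lemma substMulSub_X_zero : substMulSub R (X 0) = X 0 * X 1 :=
  substAlgHom_X _ 0

lemma substMulSub_X_one : substMulSub R (X 1) = X 0 - X 1 :=
  substAlgHom_X _ 1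

lemma coeff_substMulSub (g : MvPowerSeries (Fin 2) R) (a b : ℕ) :
    coeff (uvExp a b) (substMulSub R g) = ∑ m ∈ range (min a b + 1),
      coeff (uvExp m (a + b - 2 * m)) g * coeff (uvExp a b) (mulSubPow R m (a + b - 2 * m)) := by
  have hprod (e : Fin 2 →₀ ℕ) :
      (e.prod fun s k => (![X 0 * X 1, X 0 - X 1] s) ^ k) = mulSubPow R (e 0) (e 1) := by
    rw [Finsupp.prod_fintype _ _ fun _ => pow_zero _, Fin.prod_univ_two]
    rfl
  rw [substMulSub, substAlgHom_apply, coeff_subst hasSubst_mulSub]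
  simp_rw [hprod, smul_eq_mul]
  have hsupp : (Function.support fun e : Fin 2 →₀ ℕ =>
      coeff e g * coeff (uvExp a b) (mulSubPow R (e 0) (e 1))) ⊆
      ((range (min a b + 1)).image fun m => uvExp m (a + b - 2 * m) : Set _) := by
    intro e he
    obtain ⟨h0, h1, hsum⟩ := le_of_coeff_mulSubPow_ne_zero (right_ne_zero_of_mul he)
    refine mem_coe.mpr (mem_image.mpr ⟨e 0, mem_range.mpr (by omega), ?_⟩)
    conv_rhs => rw [← uvExp_eta e]
    exact uvExp_inj.mpr ⟨rfl, by omega⟩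
  rw [finsum_eq_sum_of_support_subset _ hsupp, sum_image fun m _ m' _ h => (uvExp_inj.mp h).1]
  rfl

lemma coeff_substMulSub_of_le (g : MvPowerSeries (Fin 2) R) (a n : ℕ) :
    coeff (uvExp a (a + n)) (substMulSub R g) = (-1) ^ n * coeff (uvExp a n) g +
      ∑ m ∈ range a, coeff (uvExp m (a + (a + n) - 2 * m)) g *
        coeff (uvExp a (a + n)) (mulSubPow R m (a + (a + n) - 2 * m)) := by
  rw [coeff_substMulSub, min_eq_left (by omega), sum_range_succ, add_comm,
    show a + (a + n) - 2 * a = n by omega, coeff_mulSubPow_diag, mul_comm]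

/-- Coefficientwise invariance under `X 0 ↦ -X 1, X 1 ↦ -X 0`. -/
def IsNegSwapInvariant (h : MvPowerSeries (Fin 2) R) : Prop :=
  ∀ a b, coeff (uvExp a b) h = (-1) ^ (a + b) * coeff (uvExp b a) h

lemma isNegSwapInvariant_substMulSub (g : MvPowerSeries (Fin 2) R) :
    IsNegSwapInvariant (substMulSub R g) := by
  intro a b
  rw [coeff_substMulSub, coeff_substMulSub, mul_sum, min_comm, add_comm b a]
  refine sum_congr rfl fun m _ => ?_
  rw [coeff_mulSubPow_swap m _ a b]
  ring

lemma substMulSub_injective : Function.Injective (substMulSub R) := by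
  rw [injective_iff_map_eq_zero]
  intro g hg
  have hrow (a : ℕ) : ∀ n, coeff (uvExp a n) g = 0 := by
    induction a using Nat.strong_induction_on with
    | _ a ih =>
      intro n
      have h := coeff_substMulSub_of_le g a n
      rw [hg, map_zero, sum_eq_zero fun m hm => by rw [ih m (mem_range.mp hm), zero_mul],
        add_zero, eq_comm] at h
      simpa using h
  exact ext_uvExp fun a b => by rw [hrow, map_zero]

/-- Solves the triangular system of `coeff_substMulSub_of_le` for `g` row by row. -/
def preimageCoeff (h : MvPowerSeries (Fin 2) R) : ℕ → ℕ → R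
  | a, n => (-1) ^ n * (coeff (uvExp a (a + n)) h -
      ∑ m : Fin a, preimageCoeff h m (a + (a + n) - 2 * m) *
        coeff (uvExp a (a + n)) (mulSubPow R m (a + (a + n) - 2 * m)))

def substMulSubPreimage (h : MvPowerSeries (Fin 2) R) : MvPowerSeries (Fin 2) R :=
  fun e => preimageCoeff h (e 0) (e 1)

lemma coeff_substMulSub_substMulSubPreimage (h : MvPowerSeries (Fin 2) R) (a n : ℕ) :
    coeff (uvExp a (a + n)) (substMulSub R (substMulSubPreimage h)) =
      coeff (uvExp a (a + n)) h := by
  have hrow : coeff (uvExp a n) (substMulSubPreimage h) = (-1) ^ n * (coeff (uvExp a (a + n)) h -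
      ∑ m ∈ range a, coeff (uvExp m (a + (a + n) - 2 * m)) (substMulSubPreimage h) *
        coeff (uvExp a (a + n)) (mulSubPow R m (a + (a + n) - 2 * m))) := by
    rw [← Fin.sum_univ_eq_sum_range]
    exact preimageCoeff.eq_1 h a n
  rw [coeff_substMulSub_of_le, hrow, ← mul_assoc, ← pow_add, Even.neg_one_pow ⟨n, rfl⟩,
    one_mul]
  exact sub_add_cancel _ _

lemma range_substMulSub : Set.range (substMulSub R) = {h | IsNegSwapInvariant h} := by
  refine Set.Subset.antisymm (Set.range_subset_iff.mpr isNegSwapInvariant_substMulSub)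
    fun h hh => ⟨substMulSubPreimage h, ext_uvExp fun a b => ?_⟩
  obtain hab | hab := le_total a b
  · obtain ⟨n, rfl⟩ := Nat.exists_eq_add_of_le hab
    exact coeff_substMulSub_substMulSubPreimage h a n
  · obtain ⟨n, rfl⟩ := Nat.exists_eq_add_of_le hab
    rw [isNegSwapInvariant_substMulSub, hh, coeff_substMulSub_substMulSubPreimage]

def tExp (a b : ℕ) : Fin 4 →₀ ℕ := Finsupp.equivFunOnFinite.symm ![a, b, a, b]

lemma eq_tExp_iff {a b : ℕ} {d : Fin 4 →₀ ℕ} :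
    d = tExp a b ↔ d 0 = a ∧ d 1 = b ∧ d 2 = a ∧ d 3 = b := by
  refine ⟨fun h => h ▸ ⟨rfl, rfl, rfl, rfl⟩, fun h => ?_⟩
  exact Finsupp.ext fun i => by fin_cases i <;> simp [tExp, h]

lemma X_mul_X_pow_mul_X_mul_X_pow (a b : ℕ) :
    ((X 0 * X 2) ^ a * (X 1 * X 3) ^ b : MvPowerSeries (Fin 4) R) = monomial (tExp a b) 1 := by
  simp only [mul_pow, X_pow_eq, monomial_mul_monomial, mul_one]
  congr 2
  exact Finsupp.ext fun i => by fin_cases i <;> simp [tExp]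

lemma hasSubst_uv : HasSubst (![X 0 * X 2, X 1 * X 3] : Fin 2 → MvPowerSeries (Fin 4) R) :=
  hasSubst_of_constantCoeff_zero fun s => by fin_cases s <;> simp

variable (R) in
def uvEmbedding : MvPowerSeries (Fin 2) R →ₐ[R] MvPowerSeries (Fin 4) R :=
  substAlgHom hasSubst_uv

lemma uvEmbedding_X_zero : uvEmbedding R (X 0) = X 0 * X 2 :=
  substAlgHom_X _ 0

lemma uvEmbedding_X_one : uvEmbedding R (X 1) = X 1 * X 3 :=
  substAlgHom_X _ 1

lemma coeff_uvEmbedding (h : MvPowerSeries (Fin 2) R) (d : Fin 4 →₀ ℕ) :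
    coeff d (uvEmbedding R h) =
      if d 0 = d 2 ∧ d 1 = d 3 then coeff (uvExp (d 0) (d 1)) h else 0 := by
  have hprod (e : Fin 2 →₀ ℕ) : (e.prod fun s k => (![X 0 * X 2, X 1 * X 3] s) ^ k) =
      (monomial (tExp (e 0) (e 1)) 1 : MvPowerSeries (Fin 4) R) := by
    rw [Finsupp.prod_fintype _ _ fun _ => pow_zero _, Fin.prod_univ_two,
      ← X_mul_X_pow_mul_X_mul_X_pow]
    rfl
  rw [uvEmbedding, substAlgHom_apply, coeff_subst hasSubst_uv]
  simp_rw [hprod, coeff_monomial, smul_eq_mul, mul_ite, mul_one, mul_zero, eq_tExp_iff]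
  split_ifs with hd
  · refine (finsum_eq_single _ (uvExp (d 0) (d 1)) fun e he => if_neg ?_).trans (if_pos ?_)
    · rintro ⟨h0, h1, -, -⟩
      exact he (by rw [← uvExp_eta e, h0, h1])
    · simp [hd]
  · exact finsum_eq_zero_of_forall_eq_zero fun e => if_neg fun h => hd ⟨by omega, by omega⟩

lemma coeff_uvEmbedding_tExp (h : MvPowerSeries (Fin 2) R) (a b : ℕ) :
    coeff (tExp a b) (uvEmbedding R h) = coeff (uvExp a b) h := by
  rw [coeff_uvEmbedding, if_pos ⟨rfl, rfl⟩]
  rfl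

lemma uvEmbedding_injective : Function.Injective (uvEmbedding R) := fun g h hgh =>
  ext_uvExp fun a b => by rw [← coeff_uvEmbedding_tExp, hgh, coeff_uvEmbedding_tExp]

lemma mem_range_uvEmbedding_iff {f : MvPowerSeries (Fin 4) R} :
    f ∈ Set.range (uvEmbedding R) ↔ ∀ d, coeff d f ≠ 0 → d 0 = d 2 ∧ d 1 = d 3 := by
  constructor
  · rintro ⟨h, rfl⟩ d hd
    rw [coeff_uvEmbedding] at hd
    by_contra hc
    exact hd (if_neg hc)
  · intro hf
    let h : MvPowerSeries (Fin 2) R := fun e => coeff (tExp (e 0) (e 1)) f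
    refine ⟨h, ext fun d => ?_⟩
    rw [coeff_uvEmbedding]
    split_ifs with hd
    · exact congrArg (coeff · f) (eq_tExp_iff.mpr ⟨rfl, rfl, hd.1.symm, hd.2.symm⟩).symm
    · by_contra hc
      exact hd (hf d (Ne.symm hc))

end

lemma sum_mul_w13_eq_zero_iff (d : Fin 4 →₀ ℕ) :
    (∀ j, ∑ i, (d i : ℤ) * w13 i j = 0) ↔ d 0 = d 2 ∧ d 1 = d 3 := by
  simp only [Fin.forall_fin_succ, Fin.sum_univ_four, w13, Matrix.cons_val', Matrix.cons_val_zero,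
    Matrix.cons_val_fin_one, Matrix.cons_val_one, Matrix.cons_val, Matrix.cons_val_succ, mul_zero,
    mul_one, mul_neg, add_zero, IsEmpty.forall_iff, and_true, true_and]
  omega

lemma two_zpow_eq_one_iff {s : ℤ} : (2 : ℂ) ^ s = 1 ↔ s = 0 := by
  simpa using Complex.ofReal_inj.trans <|
    zpow_eq_one_iff_right₀ (two_pos.le : (0 : ℝ) ≤ 2) (by norm_num)

lemma coeff_actT (lam : Fin 3 → ℂˣ) (f : PS4) (d : Fin 4 →₀ ℕ) :
    coeff d (actT lam f) = (∏ j, (lam j : ℂ) ^ (∑ i, (d i : ℤ) * w13 i j)) * coeff d f :=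
  rfl

lemma actT_eq_self_iff (f : PS4) :
    (∀ lam, actT lam f = f) ↔ ∀ d, coeff d f ≠ 0 → d 0 = d 2 ∧ d 1 = d 3 := by
  constructor
  · intro hT d hd
    by_contra hlat
    obtain ⟨j, hj⟩ := not_forall.mp (mt (sum_mul_w13_eq_zero_iff d).mp hlat)
    let lam : Fin 3 → ℂˣ := Pi.mulSingle j (Units.mk0 2 two_ne_zero)
    have hprod : ∏ j', (lam j' : ℂ) ^ (∑ i, (d i : ℤ) * w13 i j') =
        2 ^ (∑ i, (d i : ℤ) * w13 i j) := by
      rw [Fintype.prod_eq_single j fun j' hj' => by simp [lam, Pi.mulSingle_eq_of_ne hj']]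
      simp [lam]
    have h := congrArg (coeff d) (hT lam)
    rw [coeff_actT, hprod, mul_eq_right₀ hd, two_zpow_eq_one_iff] at h
    exact hj h
  · intro hf lam
    ext d
    rw [coeff_actT]
    by_cases hd : coeff d f = 0
    · rw [hd, mul_zero]
    · simp [(sum_mul_w13_eq_zero_iff d).mpr (hf d hd)]

lemma actG2_uvEmbedding (h : MvPowerSeries (Fin 2) ℂ) :
    actG2 (uvEmbedding ℂ h) = uvEmbedding ℂ h := by
  ext d
  change coeff (Finsupp.equivMapDomain (Equiv.swap (1 : Fin 4) 3) d) (uvEmbedding ℂ h) = _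
  simp only [coeff_uvEmbedding, Finsupp.equivMapDomain_apply, Equiv.symm_swap,
    Equiv.swap_apply_def, Fin.reduceEq, ↓reduceIte]
  by_cases hd : d 0 = d 2 ∧ d 1 = d 3
  · rw [if_pos ⟨hd.1, hd.2.symm⟩, if_pos hd, hd.2]
  · rw [if_neg fun h' => hd ⟨h'.1, h'.2.symm⟩, if_neg hd]

lemma actG3_uvEmbedding_eq_self_iff (h : MvPowerSeries (Fin 2) ℂ) :
    actG3 (uvEmbedding ℂ h) = uvEmbedding ℂ h ↔ IsNegSwapInvariant h := by
  have hcoeff (d : Fin 4 →₀ ℕ) : coeff d (actG3 (uvEmbedding ℂ h)) = (-1) ^ (d 0 + d 1) *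
      if d 1 = d 3 ∧ d 2 = d 0 then coeff (uvExp (d 1) (d 2)) h else 0 := by
    change _ * coeff (Finsupp.equivMapDomain (finRotate 4).symm d) (uvEmbedding ℂ h) = _
    simp only [coeff_uvEmbedding, Finsupp.equivMapDomain_apply, Equiv.symm_symm]
    rfl
  constructor
  · intro hG a b
    have h := congrArg (coeff (tExp a b)) hG
    rw [hcoeff, coeff_uvEmbedding_tExp, if_pos ⟨rfl, rfl⟩] at h
    exact h.symm
  · intro hh
    ext d
    rw [hcoeff, coeff_uvEmbedding]
    by_cases hd : d 0 = d 2 ∧ d 1 = d 3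
    · rw [if_pos ⟨hd.2, hd.1.symm⟩, if_pos hd, hh (d 0), ← hd.1]
    · rw [if_neg fun h' => hd ⟨h'.2.symm, h'.1⟩, if_neg hd, mul_zero]

lemma invariants_eq_image_uvEmbedding :
    {f : PS4 | (∀ lam : Fin 3 → ℂˣ, actT lam f = f) ∧ actG2 f = f ∧ actG3 f = f} =
      uvEmbedding ℂ '' {h | IsNegSwapInvariant h} := by
  ext f
  simp only [Set.mem_ofPred_eq, actT_eq_self_iff, ← mem_range_uvEmbedding_iff]
  constructor
  · rintro ⟨⟨h, rfl⟩, -, hG3⟩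
    exact ⟨h, (actG3_uvEmbedding_eq_self_iff h).mp hG3, rfl⟩
  · rintro ⟨h, hh, rfl⟩
    exact ⟨⟨h, rfl⟩, actG2_uvEmbedding h, (actG3_uvEmbedding_eq_self_iff h).mpr hh⟩

theorem stmt13 :
    ∃ Φ : MvPowerSeries (Fin 2) ℂ →ₐ[ℂ] PS4,
      -- `Φ` sends the two indeterminates to `t_α t_β t_γ t_δ` and `t_α t_γ − t_β t_δ`
      Φ (MvPowerSeries.X 0) =
        MvPowerSeries.X 0 * MvPowerSeries.X 1 * MvPowerSeries.X 2 * MvPowerSeries.X 3 ∧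
      Φ (MvPowerSeries.X 1) =
        MvPowerSeries.X 0 * MvPowerSeries.X 2
          - MvPowerSeries.X 1 * MvPowerSeries.X 3 ∧
      -- the two elements are algebraically independent: `Φ` is injective
      Function.Injective Φ ∧
      -- the ring of `G`-invariants is exactly `ℂ[[t_α t_β t_γ t_δ, t_α t_γ − t_β t_δ]]`
      Set.range Φ =
        {f : PS4 | (∀ lam : Fin 3 → ℂˣ, actT lam f = f) ∧ actG2 f = f ∧ actG3 f = f} := by
  refine ⟨(uvEmbedding ℂ).comp (substMulSub ℂ), ?_, ?_, ?_, ?_⟩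
  · rw [AlgHom.comp_apply, substMulSub_X_zero, map_mul, uvEmbedding_X_zero, uvEmbedding_X_one]
    ring
  · rw [AlgHom.comp_apply, substMulSub_X_one, map_sub, uvEmbedding_X_zero, uvEmbedding_X_one]
  · exact uvEmbedding_injective.comp substMulSub_injective
  · rw [invariants_eq_image_uvEmbedding, AlgHom.coe_comp, Set.range_comp, range_substMulSub]
end
end
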